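/- arXiv:2303.17046 — 2 statements merged into one kernel-verified Lean document; each statement's English description precedes it below -/
import Mathlib

section
/- Let D be a finite subset of a type X, let q : X → ℝ satisfy 0 ≤ q(x) ≤ 1 for all x ∈ D, let x₀ ∈ D, and set D' := D \ {x₀}. Let κ be a map assigning to each finite subset S ⊆ D a (finite) measure κ(S) on a measurable space Ω. Then the subsampled mechanism's output measure on D decomposes as a mixture over subsets of D': ∑_{S ⊆ D} P_D(S) • κ(S) = ∑_{S ⊆ D'} P_{D'}(S) • ( (1 − q(x₀)) • κ(S) + q(x₀) • κ(S ∪ {x₀}) ), as an equality of measures on Ω. -/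
open MeasureTheory

/-- The Poisson-subsampling probability of drawing the subset `S` from the dataset `D`,
with per-point inclusion probabilities `q`. -/
def poissonSubsample {X : Type*} [DecidableEq X] (q : X → ℝ) (D S : Finset X) : ℝ :=
  (∏ x ∈ S, q x) * ∏ x ∈ D \ S, (1 - q x)

/-- **Mixture decomposition of a subsampled mechanism.** The output measure of the
Poisson-subsampled mechanism on `D` decomposes as a mixture over subsets of `D' = D \ {x₀}`,
where each subset `S ⊆ D'` contributes `(1 − q x₀) • κ S + q x₀ • κ (S ∪ {x₀})`. -/
theorem subsampled_mechanism_mixture {X : Type*} [DecidableEq X]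
    {Ω : Type*} [MeasurableSpace Ω]
    (D : Finset X) (q : X → ℝ) (hq : ∀ x ∈ D, 0 ≤ q x ∧ q x ≤ 1)
    (x₀ : X) (hx₀ : x₀ ∈ D)
    (κ : Finset X → Measure Ω) :
    ∑ S ∈ D.powerset, ENNReal.ofReal (poissonSubsample q D S) • κ S
      = ∑ S ∈ (D \ {x₀}).powerset, ENNReal.ofReal (poissonSubsample q (D \ {x₀}) S) •
          (ENNReal.ofReal (1 - q x₀) • κ S + ENNReal.ofReal (q x₀) • κ (S ∪ {x₀})) := by
  set D' : Finset X := D \ {x₀} with hD'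
  have hx₀' : x₀ ∉ D' := by simp [hD']
  have hD : D = insert x₀ D' := by
    rw [hD', Finset.sdiff_singleton_eq_erase, Finset.insert_erase hx₀]
  -- nonnegativity of subsample probabilities over D'
  have hnn : ∀ S ∈ D'.powerset, 0 ≤ poissonSubsample q D' S := by
    intro S hS
    rw [Finset.mem_powerset] at hS
    apply mul_nonneg
    · exact Finset.prod_nonneg fun x hx => (hq x (by
        have := hS hx; exact (Finset.mem_sdiff.1 (hD' ▸ this)).1)).1
    · refine Finset.prod_nonneg fun x hx => ?_
      have hxD : x ∈ D := (Finset.mem_sdiff.1 ((Finset.mem_sdiff.1 hx).1)).1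
      linarith [(hq x hxD).2]
  have hq₀ := hq x₀ hx₀
  -- key pointwise identities
  have key1 : ∀ S ∈ D'.powerset,
      poissonSubsample q D S = (1 - q x₀) * poissonSubsample q D' S := by
    intro S hS
    rw [Finset.mem_powerset] at hS
    have hx₀S : x₀ ∉ S := fun h => hx₀' (hS h)
    have hset : D \ S = insert x₀ (D' \ S) := by
      rw [hD]
      rw [Finset.insert_sdiff_of_notMem _ hx₀S]
    unfold poissonSubsample
    rw [hset, Finset.prod_insert (by simp [Finset.mem_sdiff, hx₀'])]
    ring
  have key2 : ∀ S ∈ D'.powerset,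
      poissonSubsample q D (insert x₀ S) = q x₀ * poissonSubsample q D' S := by
    intro S hS
    rw [Finset.mem_powerset] at hS
    have hx₀S : x₀ ∉ S := fun h => hx₀' (hS h)
    have hset : D \ insert x₀ S = D' \ S := by
      rw [hD, Finset.insert_sdiff_insert]
      rw [Finset.sdiff_insert_of_notMem hx₀']
    unfold poissonSubsample
    rw [hset, Finset.prod_insert hx₀S]
    ring
  rw [hD, Finset.sum_powerset_insert hx₀', ← hD]
  rw [← Finset.sum_add_distrib]
  refine Finset.sum_congr rfl fun S hS => ?_
  have hx₀S : x₀ ∉ S := fun h => hx₀' ((Finset.mem_powerset.1 hS) h)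
  rw [key1 S hS, key2 S hS, Finset.union_comm, ← Finset.insert_eq,
    ENNReal.ofReal_mul (by linarith [hq₀.2]), ENNReal.ofReal_mul hq₀.1,
    smul_add, smul_smul, smul_smul, mul_comm]
  congr 1
  rw [mul_comm]
end

section
/- Let α > 0, I > 0, q > 0, let n_1, …, n_P > 0 be group sizes with N = ∑_{p=1}^P n_p, and let ε_1, …, ε_P > 0 be per-group privacy budgets with minimum ε₁ := min_p ε_p. Let σ* := q · √(2 · I · α / ε₁) be the noise multiplier required when every point is given the uniform budget ε₁ (i.e. the unique σ > 0 with I · 2 q² α / σ² = ε₁), and let σ_sample := q · N / (∑_{p=1}^P n_p · √(ε_p / (2 · I · α))) be the shared noise multiplier calibrated so that the weighted average of the per-group sample rates σ_sample · √(ε_p / (2 I α)) equals q. Then σ_sample ≤ σ*, with equality if and only if ε_p = ε₁ for all p. -/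
/-! With `c = 2 I α` one has `σ_sample = q N / ∑ n_p √(ε_p / c)` and, since `N = ∑ n_p`,
`σ* = q N / ∑ n_p √(ε₁ / c)`. Termwise `√(ε_p / c) ≥ √(ε₁ / c)` with equality iff
`ε_p = ε₁`, and all weights `n_p` are positive, so the denominator of `σ_sample` is the larger
one, strictly so as soon as some `ε_p` exceeds `ε₁`. -/

open Finset Real

lemma sum_mul_mul_le_sum_mul {ι : Type*} {s : Finset ι} {w f : ι → ℝ} {m : ℝ}
    (hw : ∀ i ∈ s, 0 ≤ w i) (hf : ∀ i ∈ s, m ≤ f i) :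
    (∑ i ∈ s, w i) * m ≤ ∑ i ∈ s, w i * f i := by
  rw [sum_mul]
  exact sum_le_sum fun i hi => mul_le_mul_of_nonneg_left (hf i hi) (hw i hi)

lemma sum_mul_mul_eq_sum_mul_iff {ι : Type*} {s : Finset ι} {w f : ι → ℝ} {m : ℝ}
    (hw : ∀ i ∈ s, 0 < w i) (hf : ∀ i ∈ s, m ≤ f i) :
    (∑ i ∈ s, w i) * m = ∑ i ∈ s, w i * f i ↔ ∀ i ∈ s, f i = m := by
  rw [sum_mul, sum_eq_sum_iff_of_le fun i hi => mul_le_mul_of_nonneg_left (hf i hi) (hw i hi).le]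
  exact forall₂_congr fun i hi => (mul_right_inj' (hw i hi).ne').trans eq_comm

lemma div_sum_mul_le_div_sum_mul {ι : Type*} {s : Finset ι} (hs : s.Nonempty)
    {w f : ι → ℝ} {a m : ℝ} (ha : 0 < a) (hm : 0 < m)
    (hw : ∀ i ∈ s, 0 < w i) (hf : ∀ i ∈ s, m ≤ f i) :
    a / ∑ i ∈ s, w i * f i ≤ a / ((∑ i ∈ s, w i) * m) ∧
      (a / ∑ i ∈ s, w i * f i = a / ((∑ i ∈ s, w i) * m) ↔ ∀ i ∈ s, f i = m) := by
  have hmin : 0 < (∑ i ∈ s, w i) * m := mul_pos (sum_pos hw hs) hm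
  have hsum := sum_mul_mul_le_sum_mul (fun i hi => (hw i hi).le) hf
  refine ⟨div_le_div_of_nonneg_left ha.le hmin hsum, ?_⟩
  rw [div_eq_div_iff (hmin.trans_le hsum).ne' hmin.ne', mul_right_inj' ha.ne',
    sum_mul_mul_eq_sum_mul_iff hw hf]

/-- **Sample reduces the noise multiplier versus standard DP-SGD.** The shared noise
multiplier `σ_sample` calibrated so that the weighted average of the per-group sample
rates equals `q` is at most the noise multiplier `σ* = q √(2 I α / ε₁)` needed for the
uniform minimal budget `ε₁ = min_p ε_p`, with equality iff all budgets equal `ε₁`. -/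
theorem sample_noise_le_standard (P : ℕ) (α I q : ℝ)
    (hα : 0 < α) (hI : 0 < I) (hq : 0 < q)
    (n : Fin P → ℝ) (hn : ∀ p, 0 < n p)
    (N : ℝ) (hN : N = ∑ p, n p)
    (ε : Fin P → ℝ) (hε : ∀ p, 0 < ε p)
    (εmin : ℝ) (hεmin_le : ∀ p, εmin ≤ ε p) (hεmin_mem : ∃ p, ε p = εmin)
    (σstar : ℝ) (hσstar : σstar = q * Real.sqrt (2 * I * α / εmin))
    (σsample : ℝ)
    (hσsample : σsample = q * N / (∑ p, n p * Real.sqrt (ε p / (2 * I * α)))) :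
    σsample ≤ σstar ∧ (σsample = σstar ↔ ∀ p, ε p = εmin) := by
  obtain ⟨p₀, hp₀⟩ := hεmin_mem
  subst hN hσstar hσsample
  set c := 2 * I * α
  have hc : 0 < c := by positivity
  have hεmin : 0 < εmin := hp₀ ▸ hε p₀
  have hm : 0 < √(εmin / c) := by positivity
  have hN : 0 < ∑ p, n p := sum_pos (fun p _ => hn p) ⟨p₀, mem_univ _⟩
  have hσstar : q * √(c / εmin) = q * (∑ p, n p) / ((∑ p, n p) * √(εmin / c)) := by
    rw [← inv_div, sqrt_inv, mul_comm (∑ p, n p), mul_div_mul_right _ _ hN.ne', div_eq_mul_inv q]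
  have hsqrt_eq (p : Fin P) : √(ε p / c) = √(εmin / c) ↔ ε p = εmin := by
    rw [sqrt_inj (div_pos (hε p) hc).le (div_pos hεmin hc).le, div_left_inj' hc.ne']
  rw [hσstar]
  simpa [hsqrt_eq] using div_sum_mul_le_div_sum_mul ⟨p₀, mem_univ _⟩ (mul_pos hq hN) hm
    (fun p _ => hn p) fun p _ => sqrt_le_sqrt (div_le_div_of_nonneg_right (hεmin_le p) hc.le)
end
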